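/- Let b be a rational function in the closed unit ball of H∞ with ‖b‖∞ = 1 that is not a finite Blaschke product, with pythagorean mate a whose set of zeros on T is Z_T(a) = {ξ₁,…,ξ_n}. Let φ : D → D be analytic. If the composition operator C_φ is bounded on H(b), then for every j ∈ {1,…,n} the non-tangential limit φ(ξ_j) belongs to D ∪ Z_T(a). -/

import Mathlib

open Complex MeasureTheory Set Filter

noncomputable section

attribute [local instance] Classical.propDecidable

/-- The open unit disk in `ℂ`. -/
def unitDisk : Set ℂ := Metric.ball 0 1

/-- The unit circle in `ℂ`. -/
def unitCircle : Set ℂ := Metric.sphere 0 1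

/-- Membership in `H^∞`: analytic and bounded on the unit disk. -/
def MemHinf (f : ℂ → ℂ) : Prop :=
  DifferentiableOn ℂ f unitDisk ∧ ∃ C : ℝ, ∀ z ∈ unitDisk, ‖f z‖ ≤ C

/-- Membership in the closed unit ball of `H^∞`. -/
def MemBallHinf (f : ℂ → ℂ) : Prop :=
  DifferentiableOn ℂ f unitDisk ∧ ∀ z ∈ unitDisk, ‖f z‖ ≤ 1

/-- `f` agrees on the closed unit disk with a rational function without poles there. -/
def IsRationalOnDisk (f : ℂ → ℂ) : Prop :=
  ∃ P Q : Polynomial ℂ, ∀ z ∈ Metric.closedBall (0:ℂ) 1,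
    Q.eval z ≠ 0 ∧ f z = P.eval z / Q.eval z

/-- `f` is a finite Blaschke product (multiplicities are encoded by repetition). -/
def IsFiniteBlaschke (f : ℂ → ℂ) : Prop :=
  ∃ (γ : ℂ) (k : ℕ) (lam : Fin k → ℂ), ‖γ‖ = 1 ∧ (∀ i, lam i ∈ unitDisk) ∧
    ∀ z ∈ unitDisk, f z = γ * ∏ i, (z - lam i) / (1 - (starRingEnd ℂ) (lam i) * z)

/-- The `k`-th Taylor coefficient of `f` at the origin. -/
def taylorCoeff (f : ℂ → ℂ) (k : ℕ) : ℂ := iteratedDeriv k f 0 / k.factorial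

/-- Membership in the Hardy space `H²` (square-summable Taylor coefficients). -/
def MemH2 (f : ℂ → ℂ) : Prop :=
  DifferentiableOn ℂ f unitDisk ∧ Summable fun k => ‖taylorCoeff f k‖ ^ 2

/-- The squared `H²` norm. -/
def h2NormSq (f : ℂ → ℂ) : ℝ := ∑' k, ‖taylorCoeff f k‖ ^ 2

/-- The `H²` inner product. -/
def h2Inner (f g : ℂ → ℂ) : ℂ :=
  ∑' k, (starRingEnd ℂ) (taylorCoeff f k) * taylorCoeff g k

/-- The polynomial `a₁(z) = ∏ⱼ (z − ξⱼ)^{mⱼ}`. -/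
def a1fun {n : ℕ} (ξ : Fin n → ℂ) (m : Fin n → ℕ) : ℂ → ℂ :=
  fun z => ∏ j, (z - ξ j) ^ (m j)

/-- A decomposition `f = a₁ g + q` with `g ∈ H²`, `deg q ≤ N − 1`, witnessing membership
in `H(b) = a₁H² ⊕ P_{N−1}`. -/
def HbDecompOf {n : ℕ} (ξ : Fin n → ℂ) (m : Fin n → ℕ)
    (f g : ℂ → ℂ) (q : Polynomial ℂ) : Prop :=
  MemH2 g ∧ q.degree < ((∑ j, m j : ℕ) : WithBot ℕ) ∧
    ∀ z ∈ unitDisk, f z = a1fun ξ m z * g z + q.eval z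

/-- Membership in `H(b) = a₁ H² ⊕ P_{N−1}` (description of `H(b)` for `b` rational,
not a finite Blaschke product, whose pythagorean mate has boundary zeros `ξ` with
multiplicities `m`). -/
def MemHb {n : ℕ} (ξ : Fin n → ℂ) (m : Fin n → ℕ) (f : ℂ → ℂ) : Prop :=
  ∃ gq : (ℂ → ℂ) × Polynomial ℂ, HbDecompOf ξ m f gq.1 gq.2

/-- The (unique) decomposition of a member of `H(b)`. -/
def hbDecomp {n : ℕ} (ξ : Fin n → ℂ) (m : Fin n → ℕ) (f : ℂ → ℂ) :
    (ℂ → ℂ) × Polynomial ℂ :=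
  if h : MemHb ξ m f then h.choose else (0, 0)

/-- The squared norm `⦀a₁g + q⦀² = ‖g‖²_{H²} + ‖q‖²_{H²}` on `H(b)`. -/
def hbNormSq {n : ℕ} (ξ : Fin n → ℂ) (m : Fin n → ℕ) (f : ℂ → ℂ) : ℝ :=
  h2NormSq (hbDecomp ξ m f).1 + h2NormSq fun z => ((hbDecomp ξ m f).2).eval z

/-- The inner product on `H(b)` induced by the decomposition. -/
def hbInner {n : ℕ} (ξ : Fin n → ℂ) (m : Fin n → ℕ) (f g : ℂ → ℂ) : ℂ :=
  h2Inner (hbDecomp ξ m f).1 (hbDecomp ξ m g).1 +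
    h2Inner (fun z => ((hbDecomp ξ m f).2).eval z)
      (fun z => ((hbDecomp ξ m g).2).eval z)

/-- The Stolz angle (non-tangential approach region) at a boundary point `ξ`. -/
def stolzAngle (ξ : ℂ) (M : ℝ) : Set ℂ := {z ∈ unitDisk | ‖z - ξ‖ ≤ M * (1 - ‖z‖)}

/-- `f` has non-tangential limit `L` at `ξ`. -/
def NTLimit (f : ℂ → ℂ) (ξ L : ℂ) : Prop :=
  ∀ M : ℝ, 1 < M → Tendsto f (nhdsWithin ξ (stolzAngle ξ M)) (nhds L)

/-- Radial boundary value of `f` at `ζ` (junk value if the radial limit does not exist). -/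
def bdryVal (f : ℂ → ℂ) (ζ : ℂ) : ℂ :=
  limUnder (nhdsWithin (1:ℝ) (Set.Iio 1)) fun r : ℝ => f ((r : ℂ) * ζ)

/-- The full setting: `b` is a rational function in the closed unit ball of `H^∞` with
`‖b‖_∞ = 1` which is not a finite Blaschke product; `a` is its pythagorean mate (rational,
outer — i.e. zero-free on the disk —, `a(0) > 0`, `|a|² + |b|² = 1` on the circle); the
`ξ j` are the distinct zeros of `a` on the unit circle, with multiplicities `m j`. -/
structure RationalSetting (b a : ℂ → ℂ) (n : ℕ) (ξ : Fin n → ℂ) (m : Fin n → ℕ) :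
    Prop where
  b_diff : DifferentiableOn ℂ b unitDisk
  b_rat : IsRationalOnDisk b
  b_le_one : ∀ z ∈ unitDisk, ‖b z‖ ≤ 1
  b_norm_one : sSup ((fun z => ‖b z‖) '' unitDisk) = 1
  b_not_fbp : ¬ IsFiniteBlaschke b
  a_diff : DifferentiableOn ℂ a unitDisk
  a_rat : IsRationalOnDisk a
  a_outer : ∀ z ∈ unitDisk, a z ≠ 0
  a_zero_pos : 0 < (a 0).re ∧ (a 0).im = 0
  pyth : ∀ ζ ∈ unitCircle, ‖a ζ‖ ^ 2 + ‖b ζ‖ ^ 2 = 1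
  zeros_mem : ∀ j, ξ j ∈ unitCircle
  zeros_inj : Function.Injective ξ
  mult_pos : ∀ j, 0 < m j
  factor : ∃ g : ℂ → ℂ, IsRationalOnDisk g ∧ (∀ ζ ∈ unitCircle, g ζ ≠ 0) ∧
    ∀ z ∈ Metric.closedBall (0:ℂ) 1, a z = a1fun ξ m z * g z

/-- The composition operator `C_φ` maps `H(b)` into itself and is bounded there
(with respect to the equivalent norm `⦀·⦀_b`). -/
def CompBddHb {n : ℕ} (ξ : Fin n → ℂ) (m : Fin n → ℕ) (φ : ℂ → ℂ) : Prop :=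
  (∀ f, MemHb ξ m f → MemHb ξ m fun z => f (φ z)) ∧
  ∃ C : ℝ, ∀ f, MemHb ξ m f →
    hbNormSq ξ m (fun z => f (φ z)) ≤ C * hbNormSq ξ m f

/-- The composition operator `C_φ` is compact on `H(b)`: it is bounded and the image of
every sequence in the unit ball has a subsequence whose image converges in `H(b)`. -/
def CompCompactHb {n : ℕ} (ξ : Fin n → ℂ) (m : Fin n → ℕ) (φ : ℂ → ℂ) : Prop :=
  CompBddHb ξ m φ ∧
  ∀ f : ℕ → ℂ → ℂ, (∀ k, MemHb ξ m (f k) ∧ hbNormSq ξ m (f k) ≤ 1) →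
    ∃ (κ : ℕ → ℕ) (g : ℂ → ℂ), StrictMono κ ∧ MemHb ξ m g ∧
      Tendsto (fun i => hbNormSq ξ m fun z => f (κ i) (φ z) - g z) atTop (nhds 0)

/-- The composition operator `C_φ` is Hilbert–Schmidt on `H(b)`: it is bounded and the sum
of `⦀C_φ e⦀²` over the orthonormal basis `{a₁ z^k}ₖ ∪ {z^j}_{j<N}` of
`(H(b), ⦀·⦀_b)` is finite (the finite part of the sum being automatically finite). -/
def CompHSHb {n : ℕ} (ξ : Fin n → ℂ) (m : Fin n → ℕ) (φ : ℂ → ℂ) : Prop :=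
  CompBddHb ξ m φ ∧
  Summable fun k : ℕ => hbNormSq ξ m fun z => a1fun ξ m (φ z) * φ z ^ k

/-- The weighted composition operator `W_{u,φ} f = u · (f ∘ φ)` maps `H²` boundedly
into itself. -/
def WCompBddH2 (u φ : ℂ → ℂ) : Prop :=
  (∀ f, MemH2 f → MemH2 fun z => u z * f (φ z)) ∧
  ∃ C : ℝ, ∀ f, MemH2 f →
    h2NormSq (fun z => u z * f (φ z)) ≤ C * h2NormSq f

/-- The weighted composition operator `W_{u,φ}` is compact on `H²`. -/
def WCompCompactH2 (u φ : ℂ → ℂ) : Prop :=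
  WCompBddH2 u φ ∧
  ∀ f : ℕ → ℂ → ℂ, (∀ k, MemH2 (f k) ∧ h2NormSq (f k) ≤ 1) →
    ∃ (κ : ℕ → ℕ) (g : ℂ → ℂ), StrictMono κ ∧ MemH2 g ∧
      Tendsto (fun i => h2NormSq fun z => u z * f (κ i) (φ z) - g z) atTop (nhds 0)

/-- The weighted composition operator `W_{u,φ}` is Hilbert–Schmidt on `H²`
(sum over the orthonormal basis `{z^k}` of `H²`). -/
def WCompHSH2 (u φ : ℂ → ℂ) : Prop :=
  WCompBddH2 u φ ∧ Summable fun k : ℕ => h2NormSq fun z => u z * φ z ^ k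

/-- The function `u = (a₁ ∘ φ) · ∏_{j ≥ p} (φ − φ(ξⱼ))^{mⱼ} / a₁`, where `Λ j = φ(ξ j)`
are the non-tangential limits of `φ` at the zeros of the mate. -/
def ufun {n : ℕ} (p : ℕ) (ξ : Fin n → ℂ) (m : Fin n → ℕ) (Λ : Fin n → ℂ)
    (φ : ℂ → ℂ) : ℂ → ℂ :=
  fun z => a1fun ξ m (φ z) *
    (∏ j ∈ Finset.univ.filter fun j : Fin n => p ≤ (j : ℕ), (φ z - Λ j) ^ (m j)) /
      a1fun ξ m z

/-- The reproducing kernel of the de Branges–Rovnyak space `H(c)`: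
`k_λ^c(z) = (1 − conj(c(λ)) c(z)) / (1 − conj(λ) z)`, as a function of the parameter `λ`
and the evaluation point `z`. -/
def rkKernel (c : ℂ → ℂ) (lam z : ℂ) : ℂ :=
  (1 - (starRingEnd ℂ) (c lam) * c z) / (1 - (starRingEnd ℂ) lam * z)

/-- `f` belongs to the reproducing kernel Hilbert space `H(c)` with squared norm at
most `t`: for all finite linear combinations of kernels,
`|⟨f, Σ αᵢ k_{λᵢ}⟩|² ≤ t · ‖Σ αᵢ k_{λᵢ}‖²`. -/
def HbRKBound (c f : ℂ → ℂ) (t : ℝ) : Prop :=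
  ∀ (k : ℕ) (lam α : Fin k → ℂ), (∀ i, lam i ∈ unitDisk) →
    ‖∑ i, (starRingEnd ℂ) (α i) * f (lam i)‖ ^ 2 ≤
      t * (∑ i, ∑ j, α i * (starRingEnd ℂ) (α j) * rkKernel c (lam i) (lam j)).re

/-- Membership in the de Branges–Rovnyak space `H(c)` (general RKHS definition). -/
def MemHbRK (c f : ℂ → ℂ) : Prop := ∃ t : ℝ, HbRKBound c f t

/-- `φ` has an angular derivative in the sense of Carathéodory at `ξ`:
`φ` and `φ'` have non-tangential limits at `ξ` and `|φ(ξ)| = 1`. -/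
def HasADC (φ : ℂ → ℂ) (ξ : ℂ) : Prop :=
  ∃ L L' : ℂ, ‖L‖ = 1 ∧ NTLimit φ ξ L ∧ NTLimit (deriv φ) ξ L'

/-- The measure `μ_{u,φ}(E) = ∫_{φ⁻¹(E) ∩ T} |u|² dm` (boundary values on the circle,
normalized Lebesgue measure). -/
def muMeas (u φ : ℂ → ℂ) (E : Set ℂ) : ENNReal :=
  (ENNReal.ofReal (2 * Real.pi))⁻¹ *
    ∫⁻ θ in Set.Ioc (0:ℝ) (2 * Real.pi),
      (if bdryVal φ (Complex.exp (θ * Complex.I)) ∈ E then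
        ENNReal.ofReal (‖bdryVal u (Complex.exp (θ * Complex.I))‖ ^ 2) else 0)

/-- `μ_{u,φ}` is a Carleson measure: `μ(S(ζ,r)) ≤ M r` for all Carleson windows
`S(ζ,r) = {z : |z| ≤ 1, |z − ζ| ≤ r}`, `ζ ∈ T`, `0 < r < 1`. -/
def IsCarleson (u φ : ℂ → ℂ) : Prop :=
  ∃ M : ℝ, 0 < M ∧ ∀ ζ ∈ unitCircle, ∀ r ∈ Set.Ioo (0:ℝ) 1,
    muMeas u φ (Metric.closedBall ζ r ∩ Metric.closedBall 0 1) ≤ ENNReal.ofReal (M * r)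

/-- `μ_{u,φ}` is a vanishing Carleson measure: `sup_{ζ∈T} μ(S(ζ,r))/r → 0` as `r → 0`. -/
def IsVanishingCarleson (u φ : ℂ → ℂ) : Prop :=
  ∀ ε > (0:ℝ), ∃ r₀ ∈ Set.Ioo (0:ℝ) 1, ∀ r ∈ Set.Ioo (0:ℝ) r₀, ∀ ζ ∈ unitCircle,
    muMeas u φ (Metric.closedBall ζ r ∩ Metric.closedBall 0 1) ≤ ENNReal.ofReal (ε * r)

/-- The reproducing kernel integral
`∫_T (1 − |w|²) |u(ξ)|² / |1 − conj(w) φ(ξ)|² dm(ξ)`. -/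
def repKerInt (u φ : ℂ → ℂ) (w : ℂ) : ENNReal :=
  (ENNReal.ofReal (2 * Real.pi))⁻¹ *
    ∫⁻ θ in Set.Ioc (0:ℝ) (2 * Real.pi),
      ENNReal.ofReal ((1 - ‖w‖ ^ 2) * ‖bdryVal u (Complex.exp (θ * Complex.I))‖ ^ 2 /
        ‖1 - (starRingEnd ℂ) w * bdryVal φ (Complex.exp (θ * Complex.I))‖ ^ 2)

/-!
In `H(b) = a₁H² ⊕ P_{N-1}`, a function `f = a₁g + q` has non-tangential limit `q(ξⱼ)` at `ξⱼ`:
in a Stolz angle `|(z - ξⱼ) g(z)| ≲ ‖g‖₂ √(1 - |z|)` by the `H²` growth estimate, and `a₁` is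
divisible by `z - ξⱼ`. The same estimate bounds point evaluations uniformly on a Stolz angle,
and it makes the decomposition unique, so that `⦀a₁p⦀ = ‖p‖₂` for polynomials `p`.

Since `C_φ(z ↦ z) = φ`, the limit `L = φ(ξⱼ)` exists and `|L| ≤ 1`. If `|L| = 1` but `a₁(L) ≠ 0`,
test `C_φ` on `a₁kₖ` with `kₖ(z) = ∑_{i<K} (L̄z)ⁱ`: `⦀a₁kₖ⦀ = √K`, whereas `(a₁kₖ)(φ(z))`
tends to `a₁(L) K` as `z → ξⱼ` non-tangentially, which contradicts boundedness for large `K`.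
-/

open Polynomial Topology

lemma mem_unitDisk {z : ℂ} : z ∈ unitDisk ↔ ‖z‖ < 1 := mem_ball_zero_iff

lemma mem_unitCircle {z : ℂ} : z ∈ unitCircle ↔ ‖z‖ = 1 := mem_sphere_zero_iff_norm

section Hardy

lemma hasSum_taylorCoeff_mul_pow {f : ℂ → ℂ} (hf : DifferentiableOn ℂ f unitDisk) {z : ℂ}
    (hz : z ∈ unitDisk) : HasSum (fun k => taylorCoeff f k * z ^ k) (f z) := by
  have h := Complex.hasSum_taylorSeries_on_ball hf hz
  simp only [smul_eq_mul, sub_zero] at h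
  refine h.congr_fun fun k => ?_
  simp only [taylorCoeff]
  ring

lemma h2NormSq_nonneg (f : ℂ → ℂ) : 0 ≤ h2NormSq f :=
  tsum_nonneg fun _ => by positivity

lemma h2NormSq_congr {f g : ℂ → ℂ} (h : ∀ z ∈ unitDisk, f z = g z) :
    h2NormSq f = h2NormSq g := by
  have hfg : f =ᶠ[𝓝 0] g := eventuallyEq_of_mem (Metric.ball_mem_nhds 0 one_pos) h
  simp only [h2NormSq, taylorCoeff, hfg.iteratedDeriv_eq]

lemma norm_le_of_memH2 {f : ℂ → ℂ} (hf : MemH2 f) {z : ℂ} (hz : z ∈ unitDisk) :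
    ‖f z‖ ≤ √(h2NormSq f) / √(1 - ‖z‖ ^ 2) := by
  have hz1 : ‖z‖ ^ 2 < 1 := by nlinarith [mem_unitDisk.mp hz, norm_nonneg z]
  have hgeom : HasSum (fun k : ℕ => (‖z‖ ^ k) ^ 2) (1 - ‖z‖ ^ 2)⁻¹ := by
    simpa only [← pow_mul, mul_comm _ 2] using hasSum_geometric_of_lt_one (by positivity) hz1
  have hcoeff : Summable fun k => ‖taylorCoeff f k‖ ^ (2 : ℝ) := by
    simpa only [Real.rpow_two] using hf.2
  have hpow : Summable fun k : ℕ => (‖z‖ ^ k) ^ (2 : ℝ) := by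
    simpa only [Real.rpow_two] using hgeom.summable
  obtain ⟨hsum, hle⟩ := Real.summable_and_inner_le_Lp_mul_Lq_tsum_of_nonneg
    Real.HolderConjugate.two_two (fun _ => norm_nonneg _) (fun _ => by positivity) hcoeff hpow
  simp only [Real.rpow_two, ← Real.sqrt_eq_rpow, hgeom.tsum_eq] at hle
  calc ‖f z‖ ≤ ∑' k, ‖taylorCoeff f k‖ * ‖z‖ ^ k :=
        (hasSum_taylorCoeff_mul_pow hf.1 hz).norm_le_of_bounded hsum.hasSum
          fun k => by rw [norm_mul, norm_pow]
    _ ≤ √(h2NormSq f) * √((1 - ‖z‖ ^ 2)⁻¹) := hle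
    _ = √(h2NormSq f) / √(1 - ‖z‖ ^ 2) := by rw [Real.sqrt_inv, div_eq_mul_inv]

end Hardy

section PolynomialH2

lemma iteratedDeriv_eval (q : ℂ[X]) (k : ℕ) (x : ℂ) :
    iteratedDeriv k (fun z => q.eval z) x = (derivative^[k] q).eval x := by
  induction k generalizing q with
  | zero => simp
  | succ k ih =>
    rw [iteratedDeriv_succ', show deriv (fun z => q.eval z) = fun z => q.derivative.eval z from
      funext fun _ => q.deriv, ih, Function.iterate_succ_apply]

lemma taylorCoeff_eval (q : ℂ[X]) (k : ℕ) : taylorCoeff (fun z => q.eval z) k = q.coeff k := by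
  have hk : (k.factorial : ℂ) ≠ 0 := by exact_mod_cast k.factorial_ne_zero
  rw [taylorCoeff, iteratedDeriv_eval, ← coeff_zero_eq_eval_zero, coeff_iterate_derivative,
    zero_add, Nat.descFactorial_self, nsmul_eq_mul, mul_div_cancel_left₀ _ hk]

lemma h2NormSq_eval {q : ℂ[X]} {N : ℕ} (hq : q.degree < N) :
    h2NormSq (fun z => q.eval z) = ∑ k ∈ Finset.range N, ‖q.coeff k‖ ^ 2 := by
  simp only [h2NormSq, taylorCoeff_eval]
  refine tsum_eq_sum fun k hk => ?_
  rw [coeff_eq_zero_of_degree_lt (hq.trans_le (by simpa using hk)), norm_zero, sq, mul_zero]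

lemma memH2_eval (q : ℂ[X]) : MemH2 fun z => q.eval z := by
  refine ⟨q.differentiable.differentiableOn, ?_⟩
  simp only [taylorCoeff_eval]
  exact summable_of_ne_finset_zero (s := Finset.range (q.natDegree + 1)) fun k hk => by
    rw [coeff_eq_zero_of_natDegree_lt (by simpa [Nat.lt_succ_iff] using hk), norm_zero, sq,
      mul_zero]

lemma norm_eval_le_of_degree_lt {q : ℂ[X]} {N : ℕ} (hq : q.degree < N) {z : ℂ} (hz : ‖z‖ ≤ 1) :
    ‖q.eval z‖ ≤ √N * √(h2NormSq fun w => q.eval w) := by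
  rcases eq_or_ne q 0 with rfl | hq0
  · simp only [eval_zero, norm_zero]
    positivity
  rw [h2NormSq_eval hq, eval_eq_sum_range' ((natDegree_lt_iff_degree_lt hq0).2 hq) z]
  calc ‖∑ k ∈ Finset.range N, q.coeff k * z ^ k‖
      ≤ ∑ k ∈ Finset.range N, ‖q.coeff k‖ * 1 := by
        refine (norm_sum_le _ _).trans (Finset.sum_le_sum fun k _ => ?_)
        rw [norm_mul, norm_pow]
        gcongr
        exact pow_le_one₀ (norm_nonneg z) hz
    _ ≤ √(∑ k ∈ Finset.range N, ‖q.coeff k‖ ^ 2) * √(∑ _k ∈ Finset.range N, (1 : ℝ) ^ 2) :=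
        Real.sum_mul_le_sqrt_mul_sqrt _ _ _
    _ = √N * √(∑ k ∈ Finset.range N, ‖q.coeff k‖ ^ 2) := by simp [mul_comm]

end PolynomialH2

section Stolz

variable {ξ : ℂ} {M : ℝ}

lemma ofReal_mul_mem_stolzAngle (hξ : ‖ξ‖ = 1) (hM : 1 ≤ M) {t : ℝ} (ht : t ∈ Ioo 0 1) :
    (t : ℂ) * ξ ∈ stolzAngle ξ M := by
  have hnorm : ‖(t : ℂ) * ξ‖ = t := by simp [hξ, abs_of_pos ht.1]
  have hdist : ‖(t : ℂ) * ξ - ξ‖ = 1 - t := by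
    rw [show (t : ℂ) * ξ - ξ = ((t - 1 : ℝ) : ℂ) * ξ by push_cast; ring, norm_mul,
      Complex.norm_real, hξ, mul_one, Real.norm_of_nonpos (by linarith [ht.2]), neg_sub]
  refine ⟨mem_unitDisk.2 (by rw [hnorm]; exact ht.2), ?_⟩
  rw [hdist, hnorm]
  nlinarith [ht.2]

lemma stolzAngle_neBot (hξ : ‖ξ‖ = 1) (hM : 1 ≤ M) : (𝓝[stolzAngle ξ M] ξ).NeBot := by
  have hradial : Tendsto (fun t : ℝ => (t : ℂ) * ξ) (𝓝[<] 1) (𝓝[stolzAngle ξ M] ξ) := by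
    refine tendsto_nhdsWithin_iff.2 ⟨?_, ?_⟩
    · have hcont : Continuous fun t : ℝ => (t : ℂ) * ξ := by fun_prop
      simpa using hcont.continuousWithinAt.tendsto (s := Iio 1) (x := 1)
    · filter_upwards [Ioo_mem_nhdsLT zero_lt_one] with t ht
      exact ofReal_mul_mem_stolzAngle hξ hM ht
  exact hradial.neBot

lemma norm_sub_mul_le_of_memH2 {f : ℂ → ℂ} (hf : MemH2 f) {z : ℂ} (hz : z ∈ stolzAngle ξ M) :
    ‖(z - ξ) * f z‖ ≤ M * √(h2NormSq f) * √(1 - ‖z‖) := by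
  have hz1 : 0 < 1 - ‖z‖ := by linarith [mem_unitDisk.1 hz.1]
  have hsqrt : √(1 - ‖z‖) ≤ √(1 - ‖z‖ ^ 2) := Real.sqrt_le_sqrt (by nlinarith [norm_nonneg z])
  calc ‖(z - ξ) * f z‖ ≤ (M * (1 - ‖z‖)) * (√(h2NormSq f) / √(1 - ‖z‖)) := by
        rw [norm_mul]
        refine mul_le_mul hz.2 ((norm_le_of_memH2 hf hz.1).trans ?_) (norm_nonneg _)
          ((norm_nonneg _).trans hz.2)
        exact div_le_div_of_nonneg_left (Real.sqrt_nonneg _) (Real.sqrt_pos.2 hz1) hsqrt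
    _ = M * √(h2NormSq f) * ((1 - ‖z‖) / √(1 - ‖z‖)) := by ring
    _ = M * √(h2NormSq f) * √(1 - ‖z‖) := by rw [Real.div_sqrt]

lemma tendsto_sub_mul_of_memH2 (hξ : ‖ξ‖ = 1) {f : ℂ → ℂ} (hf : MemH2 f) :
    Tendsto (fun z => (z - ξ) * f z) (𝓝[stolzAngle ξ M] ξ) (𝓝 0) := by
  have hbound : Tendsto (fun z : ℂ => M * √(h2NormSq f) * √(1 - ‖z‖)) (𝓝[stolzAngle ξ M] ξ)
      (𝓝 0) := by
    have hcont : Continuous fun z : ℂ => M * √(h2NormSq f) * √(1 - ‖z‖) := by fun_prop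
    simpa [hξ] using hcont.continuousWithinAt.tendsto (s := stolzAngle ξ M) (x := ξ)
  refine squeeze_zero_norm' ?_ hbound
  filter_upwards [self_mem_nhdsWithin] with z hz using norm_sub_mul_le_of_memH2 hf hz

lemma norm_le_of_ntLimit (hξ : ‖ξ‖ = 1) {φ F : ℂ → ℂ} {L : ℂ} {B : ℝ} (hF : ContinuousAt F L)
    (hφ : NTLimit φ ξ L) (hB : ∀ z ∈ stolzAngle ξ 2, ‖F (φ z)‖ ≤ B) : ‖F L‖ ≤ B := by
  have := stolzAngle_neBot hξ one_le_two
  refine le_of_tendsto ((hF.tendsto.comp (hφ 2 one_lt_two)).norm) ?_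
  filter_upwards [self_mem_nhdsWithin] with z hz using hB z hz

end Stolz

section HbSpace

variable {n : ℕ} {ξ : Fin n → ℂ} {m : Fin n → ℕ}

def a1poly (ξ : Fin n → ℂ) (m : Fin n → ℕ) : ℂ[X] := ∏ j, (X - C (ξ j)) ^ m j

lemma eval_a1poly (z : ℂ) : (a1poly ξ m).eval z = a1fun ξ m z := by
  simp [a1poly, a1fun, eval_prod]

lemma monic_a1poly : (a1poly ξ m).Monic :=
  monic_prod_of_monic _ _ fun j _ => (monic_X_sub_C (ξ j)).pow (m j)

lemma natDegree_a1poly : (a1poly ξ m).natDegree = ∑ j, m j := by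
  rw [a1poly, natDegree_prod_of_monic _ _ fun j _ => (monic_X_sub_C (ξ j)).pow (m j)]
  simp

lemma X_sub_C_pow_dvd_a1poly {j : Fin n} {k : ℕ} (hk : k ≤ m j) :
    (X - C (ξ j)) ^ k ∣ a1poly ξ m :=
  (pow_dvd_pow _ hk).trans (Finset.dvd_prod_of_mem _ (Finset.mem_univ j))

lemma exists_a1fun_eq_pow_mul {j : Fin n} {k : ℕ} (hk : k ≤ m j) :
    ∃ R : ℂ[X], ∀ z, a1fun ξ m z = (z - ξ j) ^ k * R.eval z := by
  obtain ⟨R, hR⟩ := X_sub_C_pow_dvd_a1poly (ξ := ξ) hk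
  exact ⟨R, fun z => by rw [← eval_a1poly, hR]; simp⟩

lemma a1fun_ne_zero (hξ : ∀ i, ξ i ∈ unitCircle) {z : ℂ} (hz : z ∈ unitDisk) :
    a1fun ξ m z ≠ 0 :=
  Finset.prod_ne_zero_iff.2 fun i _ => pow_ne_zero _ <| sub_ne_zero.2 fun h => by
    simp [h, mem_unitDisk, mem_unitCircle.1 (hξ i)] at hz

lemma exists_rootMultiplicity_lt (hinj : Function.Injective ξ) {p : ℂ[X]} (hp0 : p ≠ 0)
    (hp : p.degree < (∑ j, m j : ℕ)) : ∃ j, p.rootMultiplicity (ξ j) < m j := by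
  by_contra! hmult
  have hcop : (↑(Finset.univ : Finset (Fin n)) : Set (Fin n)).Pairwise
      (Function.onFun IsCoprime fun j => (X - C (ξ j)) ^ m j) :=
    fun i _ j _ hij => (pairwise_coprime_X_sub_C hinj hij).pow
  have hdvd : a1poly ξ m ∣ p := Finset.prod_dvd_of_coprime hcop fun j _ =>
    (pow_dvd_pow _ (hmult j)).trans (pow_rootMultiplicity_dvd p (ξ j))
  have hdeg := natDegree_le_of_dvd hdvd hp0
  rw [natDegree_a1poly] at hdeg
  exact (natDegree_lt_iff_degree_lt hp0).2 hp |>.not_ge hdeg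

lemma memHb_eval (p : ℂ[X]) : MemHb ξ m fun z => p.eval z := by
  refine ⟨(fun z => (p /ₘ a1poly ξ m).eval z, p %ₘ a1poly ξ m), memH2_eval _, ?_, fun z _ => ?_⟩
  · simpa [degree_eq_natDegree monic_a1poly.ne_zero, natDegree_a1poly] using
      degree_modByMonic_lt p (monic_a1poly (ξ := ξ) (m := m))
  · conv_lhs => rw [← modByMonic_add_div p (a1poly ξ m)]
    simp only [eval_add, eval_mul, eval_a1poly, add_comm]

lemma hbDecompOf_a1fun_mul (p : ℂ[X]) :
    HbDecompOf ξ m (fun z => a1fun ξ m z * p.eval z) (fun z => p.eval z) 0 :=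
  ⟨memH2_eval p, by rw [degree_zero]; exact WithBot.bot_lt_coe _, fun z _ => by simp⟩

lemma hbDecompOf_hbDecomp {F : ℂ → ℂ} (hF : MemHb ξ m F) :
    HbDecompOf ξ m F (hbDecomp ξ m F).1 (hbDecomp ξ m F).2 := by
  rw [hbDecomp, dif_pos hF]
  exact hF.choose_spec

end HbSpace

section HbDecomposition

variable {n : ℕ} {ξ : Fin n → ℂ} {m : Fin n → ℕ}

lemma eq_zero_of_eval_eq_a1fun_mul (hξ : ∀ i, ξ i ∈ unitCircle) (hinj : Function.Injective ξ)
    {p : ℂ[X]} (hp : p.degree < (∑ j, m j : ℕ)) {h : ℂ → ℂ}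
    (hph : ∀ z ∈ unitDisk, p.eval z = a1fun ξ m z * h z)
    (hh : ∀ j, Tendsto (fun z => (z - ξ j) * h z) (𝓝[stolzAngle (ξ j) 2] (ξ j)) (𝓝 0)) :
    p = 0 := by
  by_contra hp0
  obtain ⟨j, hj⟩ := exists_rootMultiplicity_lt hinj hp0 hp
  set s := p.rootMultiplicity (ξ j)
  set p' := p /ₘ (X - C (ξ j)) ^ s
  obtain ⟨R, hR⟩ := exists_a1fun_eq_pow_mul (ξ := ξ) (k := s + 1) hj
  have hξj := mem_unitCircle.1 (hξ j)
  -- `p' = p / (X - ξⱼ)ˢ` does not vanish at `ξⱼ`, but `a₁ / (X - ξⱼ)ˢ` still does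
  have hfactor : ∀ z ∈ stolzAngle (ξ j) 2, p'.eval z = R.eval z * ((z - ξ j) * h z) := by
    intro z hz
    have hz1 := mem_unitDisk.1 hz.1
    have hne : z - ξ j ≠ 0 := sub_ne_zero.2 fun h => by
      rw [h, hξj] at hz1
      exact lt_irrefl _ hz1
    apply mul_left_cancel₀ (pow_ne_zero s hne)
    have hp' := congrArg (eval z) (pow_mul_divByMonic_rootMultiplicity_eq p (ξ j))
    simp only [eval_mul, eval_pow, eval_sub, eval_X, eval_C] at hp'
    rw [hp', hph z hz.1, hR]
    ring
  have := stolzAngle_neBot hξj one_le_two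
  have hlim : Tendsto (fun z => p'.eval z) (𝓝[stolzAngle (ξ j) 2] (ξ j)) (𝓝 0) := by
    simpa using ((R.continuous.tendsto (ξ j)).mono_left nhdsWithin_le_nhds).mul (hh j)
      |>.congr' (eventually_nhdsWithin_of_forall fun z hz => (hfactor z hz).symm)
  exact eval_divByMonic_pow_rootMultiplicity_ne_zero (ξ j) hp0 <| tendsto_nhds_unique
    ((p'.continuous.tendsto (ξ j)).mono_left nhdsWithin_le_nhds) hlim

lemma HbDecompOf.unique (hξ : ∀ i, ξ i ∈ unitCircle) (hinj : Function.Injective ξ)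
    {F g g' : ℂ → ℂ} {q q' : ℂ[X]} (hd : HbDecompOf ξ m F g q) (hd' : HbDecompOf ξ m F g' q') :
    q = q' ∧ EqOn g g' unitDisk := by
  obtain ⟨hg, hq, hF⟩ := hd
  obtain ⟨hg', hq', hF'⟩ := hd'
  have hdiff : ∀ z ∈ unitDisk, (q' - q).eval z = a1fun ξ m z * (g z - g' z) := by
    intro z hz
    rw [eval_sub, mul_sub]
    linear_combination hF z hz - hF' z hz
  have hqq : q' - q = 0 := eq_zero_of_eval_eq_a1fun_mul hξ hinj
    ((degree_sub_le _ _).trans_lt (max_lt hq' hq)) hdiff fun j => by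
      have hξj := mem_unitCircle.1 (hξ j)
      simpa only [mul_sub, sub_zero] using
        (tendsto_sub_mul_of_memH2 hξj hg).sub (tendsto_sub_mul_of_memH2 hξj hg')
  refine ⟨(sub_eq_zero.1 hqq).symm, fun z hz => ?_⟩
  have := hdiff z hz
  rw [hqq, eval_zero, eq_comm, mul_eq_zero, sub_eq_zero] at this
  exact this.resolve_left (a1fun_ne_zero hξ hz)

lemma hbNormSq_a1fun_mul (hξ : ∀ i, ξ i ∈ unitCircle) (hinj : Function.Injective ξ)
    (p : ℂ[X]) :
    hbNormSq ξ m (fun z => a1fun ξ m z * p.eval z) = h2NormSq fun z => p.eval z := by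
  have hd := hbDecompOf_a1fun_mul (ξ := ξ) (m := m) p
  obtain ⟨hq, hg⟩ := (hbDecompOf_hbDecomp ⟨(_, _), hd⟩).unique hξ hinj hd
  rw [hbNormSq, h2NormSq_congr hg, hq, h2NormSq_eval (q := 0) (N := 0) (by simp),
    Finset.sum_range_zero, add_zero]

lemma ntLimit_of_hbDecompOf {j : Fin n} (hξ : ξ j ∈ unitCircle) (hmj : 0 < m j)
    {F g : ℂ → ℂ} {q : ℂ[X]} (hd : HbDecompOf ξ m F g q) :
    NTLimit F (ξ j) (q.eval (ξ j)) := by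
  intro M _
  obtain ⟨R, hR⟩ := exists_a1fun_eq_pow_mul (ξ := ξ) hmj
  have hlim := (((R.continuous.tendsto (ξ j)).mono_left nhdsWithin_le_nhds).mul
    (tendsto_sub_mul_of_memH2 (M := M) (mem_unitCircle.1 hξ) hd.1)).add
    ((q.continuous.tendsto (ξ j)).mono_left nhdsWithin_le_nhds)
  rw [mul_zero, zero_add] at hlim
  refine hlim.congr' (eventually_nhdsWithin_of_forall fun z hz => ?_)
  rw [hd.2.2 z hz.1, hR, pow_one]
  ring

lemma exists_norm_le_mul_sqrt_hbNormSq {j : Fin n} (hmj : 0 < m j) {M : ℝ} (hM : 0 ≤ M) :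
    ∃ K, 0 ≤ K ∧ ∀ F, MemHb ξ m F → ∀ z ∈ stolzAngle (ξ j) M,
      ‖F z‖ ≤ K * √(hbNormSq ξ m F) := by
  obtain ⟨R, hR⟩ := exists_a1fun_eq_pow_mul (ξ := ξ) hmj
  obtain ⟨B, hB⟩ := (isCompact_closedBall (0 : ℂ) 1).exists_bound_of_continuousOn
    (f := fun z => R.eval z) R.continuous.continuousOn
  have hB0 : 0 ≤ B := (norm_nonneg _).trans (hB 0 (by simp))
  refine ⟨B * M + √(∑ i, m i : ℕ), by positivity, fun F hF z hz => ?_⟩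
  obtain ⟨hg, hq, hF⟩ := hbDecompOf_hbDecomp hF
  set g := (hbDecomp ξ m F).1
  set q := (hbDecomp ξ m F).2
  have hz1 : ‖z‖ < 1 := mem_unitDisk.1 hz.1
  have hgF : √(h2NormSq g) ≤ √(hbNormSq ξ m F) :=
    Real.sqrt_le_sqrt (le_add_of_nonneg_right (h2NormSq_nonneg _))
  have hqF : √(h2NormSq fun w => q.eval w) ≤ √(hbNormSq ξ m F) :=
    Real.sqrt_le_sqrt (le_add_of_nonneg_left (h2NormSq_nonneg _))
  have hgz : ‖(z - ξ j) * g z‖ ≤ M * √(h2NormSq g) :=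
    (norm_sub_mul_le_of_memH2 hg hz).trans <| mul_le_of_le_one_right (by positivity) <|
      Real.sqrt_le_one.2 (by linarith [norm_nonneg z])
  calc ‖F z‖ = ‖R.eval z * ((z - ξ j) * g z) + q.eval z‖ := by
        rw [hF z hz.1, hR, pow_one]
        ring_nf
    _ ≤ B * (M * √(h2NormSq g)) + √(∑ i, m i : ℕ) * √(h2NormSq fun w => q.eval w) := by
        refine norm_add_le_of_le ?_ (norm_eval_le_of_degree_lt hq hz1.le)
        rw [norm_mul]
        exact mul_le_mul (hB z (mem_closedBall_zero_iff.2 hz1.le)) hgz (norm_nonneg _) hB0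
    _ ≤ B * (M * √(hbNormSq ξ m F)) + √(∑ i, m i : ℕ) * √(hbNormSq ξ m F) := by gcongr
    _ = (B * M + √(∑ i, m i : ℕ)) * √(hbNormSq ξ m F) := by ring

end HbDecomposition

lemma exists_norm_a1fun_mul_eval_le {n : ℕ} {ξ : Fin n → ℂ} {m : Fin n → ℕ}
    (hξ : ∀ i, ξ i ∈ unitCircle) (hinj : Function.Injective ξ) {j : Fin n} (hmj : 0 < m j)
    {φ : ℂ → ℂ} (hφ : CompBddHb ξ m φ) {L : ℂ} (hL : NTLimit φ (ξ j) L) :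
    ∃ K, ∀ p : ℂ[X], ‖a1fun ξ m L * p.eval L‖ ≤ K * √(h2NormSq fun z => p.eval z) := by
  obtain ⟨hmaps, C, hC⟩ := hφ
  obtain ⟨K, hK0, hK⟩ := exists_norm_le_mul_sqrt_hbNormSq (ξ := ξ) hmj zero_le_two
  refine ⟨K * √C, fun p => ?_⟩
  have hp : MemHb ξ m fun z => a1fun ξ m z * p.eval z := ⟨(_, _), hbDecompOf_a1fun_mul p⟩
  have hcont : ContinuousAt (fun z => a1fun ξ m z * p.eval z) L := by
    simp only [← eval_a1poly, ← eval_mul]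
    exact (a1poly ξ m * p).continuousAt
  calc ‖a1fun ξ m L * p.eval L‖
      ≤ K * √(hbNormSq ξ m fun z => a1fun ξ m (φ z) * p.eval (φ z)) :=
        norm_le_of_ntLimit (F := fun z => a1fun ξ m z * p.eval z) (mem_unitCircle.1 (hξ j))
          hcont hL fun z hz => hK _ (hmaps _ hp) z hz
    _ ≤ K * √(C * h2NormSq fun z => p.eval z) := by
        gcongr
        exact (hC _ hp).trans_eq (by rw [hbNormSq_a1fun_mul hξ hinj])
    _ = K * √C * √(h2NormSq fun z => p.eval z) := by
        rw [Real.sqrt_mul' _ (h2NormSq_nonneg _), mul_assoc]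

def truncSzegoKernel (L : ℂ) (K : ℕ) : ℂ[X] :=
  ∑ k ∈ Finset.range K, C (starRingEnd ℂ L ^ k) * X ^ k

section truncSzegoKernel

variable {L : ℂ} {K : ℕ}

lemma coeff_truncSzegoKernel (i : ℕ) :
    (truncSzegoKernel L K).coeff i = if i < K then starRingEnd ℂ L ^ i else 0 := by
  simp only [truncSzegoKernel, finsetSum_coeff, coeff_C_mul, coeff_X_pow, mul_ite, mul_one,
    mul_zero, Finset.sum_ite_eq, Finset.mem_range]

lemma h2NormSq_truncSzegoKernel (hL : ‖L‖ = 1) :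
    h2NormSq (fun z => (truncSzegoKernel L K).eval z) = K := by
  have hdeg : (truncSzegoKernel L K).degree < K := by
    refine (degree_lt_iff_coeff_zero _ _).2 fun i hi => ?_
    rw [coeff_truncSzegoKernel, if_neg (by exact_mod_cast hi.not_gt)]
  rw [h2NormSq_eval hdeg, Finset.sum_congr rfl fun k hk => by
    rw [coeff_truncSzegoKernel, if_pos (Finset.mem_range.1 hk), norm_pow, Complex.norm_conj, hL,
      one_pow, one_pow]]
  simp

lemma eval_truncSzegoKernel_self (hL : ‖L‖ = 1) : (truncSzegoKernel L K).eval L = K := by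
  have hLL : starRingEnd ℂ L * L = 1 := by
    rw [mul_comm, Complex.mul_conj, Complex.normSq_eq_norm_sq, hL]
    norm_num
  simp [truncSzegoKernel, eval_finsetSum, ← mul_pow, hLL]

end truncSzegoKernel

lemma exists_nat_mul_sqrt_lt {a : ℝ} (ha : 0 < a) (B : ℝ) : ∃ K : ℕ, B * √K < a * K := by
  obtain ⟨K, hK⟩ := exists_nat_gt ((|B| / a) ^ 2)
  have hK0 : 0 < (K : ℝ) := (sq_nonneg _).trans_lt hK
  have hBK : |B| < a * √K := (div_lt_iff₀' ha).1 <| (Real.lt_sqrt (by positivity)).2 hK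
  refine ⟨K, ?_⟩
  calc B * √K ≤ |B| * √K := by gcongr; exact le_abs_self B
    _ < a * √K * √K := by gcongr
    _ = a * K := by rw [mul_assoc, Real.mul_self_sqrt hK0.le]

theorem boundary_limits_constrained_general
    (b a : ℂ → ℂ) (n : ℕ) (ξ : Fin n → ℂ) (m : Fin n → ℕ)
    (hset : RationalSetting b a n ξ m)
    (φ : ℂ → ℂ)
    (hφmap : ∀ z ∈ unitDisk, φ z ∈ unitDisk)
    (hbdd : CompBddHb ξ m φ) :
    ∀ j, ∃ L, NTLimit φ (ξ j) L ∧ (L ∈ unitDisk ∨ ∃ i, L = ξ i) := by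
  intro j
  have hξj := mem_unitCircle.1 (hset.zeros_mem j)
  obtain ⟨⟨g, q⟩, hdecomp⟩ := hbdd.1 _ (memHb_eval (ξ := ξ) (m := m) X)
  simp only [eval_X] at hdecomp
  have hL := ntLimit_of_hbDecompOf (hset.zeros_mem j) (hset.mult_pos j) hdecomp
  set L := q.eval (ξ j)
  refine ⟨L, hL, ?_⟩
  have hL1 : ‖L‖ ≤ 1 := norm_le_of_ntLimit (F := id) hξj continuousAt_id hL fun z hz =>
    (mem_unitDisk.1 (hφmap z hz.1)).le
  rcases hL1.lt_or_eq with hL1 | hL1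
  · exact Or.inl (mem_unitDisk.2 hL1)
  by_contra! hLξ
  have ha : 0 < ‖a1fun ξ m L‖ :=
    norm_pos_iff.2 <| Finset.prod_ne_zero_iff.2 fun i _ => pow_ne_zero _ (sub_ne_zero.2 (hLξ.2 i))
  obtain ⟨B, hB⟩ := exists_norm_a1fun_mul_eval_le hset.zeros_mem hset.zeros_inj
    (hset.mult_pos j) hbdd hL
  obtain ⟨K, hK⟩ := exists_nat_mul_sqrt_lt ha B
  have hKB := hB (truncSzegoKernel L K)
  rw [eval_truncSzegoKernel_self hL1, h2NormSq_truncSzegoKernel hL1, norm_mul,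
    Complex.norm_natCast] at hKB
  exact hK.not_ge hKB

/-- Theorem 3.5. If `C_φ` is bounded on `H(b)`, then for every `j`,
the non-tangential limit `φ(ξⱼ)` belongs to `D ∪ Z_T(a)`. -/
theorem boundary_limits_constrained
    (b a : ℂ → ℂ) (n : ℕ) (ξ : Fin n → ℂ) (m : Fin n → ℕ)
    (hset : RationalSetting b a n ξ m)
    (φ : ℂ → ℂ) (hφd : DifferentiableOn ℂ φ unitDisk)
    (hφmap : ∀ z ∈ unitDisk, φ z ∈ unitDisk)
    (hbdd : CompBddHb ξ m φ) :
    ∀ j, ∃ L, NTLimit φ (ξ j) L ∧ (L ∈ unitDisk ∨ ∃ i, L = ξ i) :=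
  boundary_limits_constrained_general b a n ξ m hset φ hφmap hbdd

end
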